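/- For bounded operators A, B between Hilbert spaces, A ≤⁻ B in the minus order if and only if there exist bounded operators X ∈ L(K) and Y ∈ L(H) such that A = XB = BY and A = XA. -/

import Mathlib

/-!
Forward: `A = Qt B` with `Qt` idempotent gives `Qt A = Qt Qt B = A`.

Backward: correct `X` and `Y` by orthogonal projections. With `P` the projection onto the closure
of `range B`, one has `X P X B = X P A = X A = X B`; since an operator vanishing on `range B`
vanishes on its closure, `X P X P = X P`. With `R` the projection onto
`(ker A)ᗮ = closure (range A†)`, one has `A Y = A`, so `Y R - R` maps into `ker A = ker R`,
whence `R Y R = R` and `Y R Y R = Y R`.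
-/

open ContinuousLinearMap

section Factorization

variable {R M N : Type*} [Semiring R] [TopologicalSpace M] [AddCommMonoid M] [Module R M]
  [TopologicalSpace N] [AddCommMonoid N] [Module R N]
  {A B : M →L[R] N} {X : N →L[R] N} {Y : M →L[R] M}

theorem exists_idempotent_left_factor {P : N →L[R] N} (hPB : P ∘L B = B)
    (hcancel : ∀ Z W : N →L[R] N, Z ∘L B = W ∘L B → Z ∘L P = W ∘L P)
    (hXB : A = X ∘L B) (hBY : A = B ∘L Y) (hXA : A = X ∘L A) :
    ∃ Qt : N →L[R] N, Qt ∘L Qt = Qt ∧ A = Qt ∘L B := by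
  have hPA : P ∘L A = A := by rw [hBY, ← comp_assoc, hPB]
  have hXPXB : (X ∘L P ∘L X) ∘L B = X ∘L B := by
    rw [comp_assoc, comp_assoc, ← hXB, hPA, ← hXA, hXB]
  refine ⟨X ∘L P, ?_, by rw [comp_assoc, hPB, hXB]⟩
  calc (X ∘L P) ∘L (X ∘L P) = (X ∘L P ∘L X) ∘L P := by simp only [comp_assoc]
    _ = X ∘L P := hcancel _ _ hXPXB

theorem exists_idempotent_right_factor {P : M →L[R] M} (hAP : A ∘L P = A)
    (hcancel : ∀ Z W : M →L[R] M, A ∘L Z = A ∘L W → P ∘L Z = P ∘L W)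
    (hXB : A = X ∘L B) (hBY : A = B ∘L Y) (hXA : A = X ∘L A) :
    ∃ Q : M →L[R] M, Q ∘L Q = Q ∧ A = B ∘L Q := by
  have hAY : A ∘L Y = A := by
    calc A ∘L Y = X ∘L B ∘L Y := by rw [hXB, comp_assoc]
      _ = A := by rw [← hBY, ← hXA]
  have hPP : P ∘L P = P := by
    simpa only [comp_id] using hcancel P (.id R M) (by rw [hAP, comp_id])
  have hPYP : P ∘L Y ∘L P = P ∘L P := hcancel _ _ (by rw [← comp_assoc, hAY])
  refine ⟨Y ∘L P, ?_, by rw [← comp_assoc, ← hBY, hAP]⟩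
  calc (Y ∘L P) ∘L (Y ∘L P) = Y ∘L P ∘L Y ∘L P := by simp only [comp_assoc]
    _ = Y ∘L P := by rw [hPYP, hPP]

end Factorization

section Projections

variable {𝕜 E F : Type*} [RCLike 𝕜] [NormedAddCommGroup E] [InnerProductSpace 𝕜 E]
  [NormedAddCommGroup F] [InnerProductSpace 𝕜 F]

theorem starProjection_closure_range_comp_self [CompleteSpace F] (B : E →L[𝕜] F) :
    (B : E →ₗ[𝕜] F).range.topologicalClosure.starProjection ∘L B = B := by
  ext x
  exact Submodule.starProjection_eq_self_iff.2 (Submodule.le_topologicalClosure _ ⟨x, rfl⟩)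

theorem comp_starProjection_closure_range_eq_of_comp_eq [CompleteSpace F] {B : E →L[𝕜] F}
    {Z W : F →L[𝕜] F} (h : Z ∘L B = W ∘L B) :
    Z ∘L (B : E →ₗ[𝕜] F).range.topologicalClosure.starProjection =
      W ∘L (B : E →ₗ[𝕜] F).range.topologicalClosure.starProjection := by
  have hrange : Set.EqOn Z W (B : E →ₗ[𝕜] F).range := by
    rintro _ ⟨x, rfl⟩
    exact congr($h x)
  ext x
  apply (hrange.closure Z.continuous W.continuous)
  rw [← Submodule.topologicalClosure_coe]
  exact Submodule.starProjection_apply_mem _ x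

theorem comp_starProjection_orthogonal_ker [CompleteSpace E] (A : E →L[𝕜] F) :
    A ∘L (A : E →ₗ[𝕜] F).kerᗮ.starProjection = A := by
  ext x
  have hker : A ((A : E →ₗ[𝕜] F).ker.starProjection x) = 0 :=
    Submodule.starProjection_apply_mem (A : E →ₗ[𝕜] F).ker x
  rw [comp_apply, Submodule.starProjection_orthogonal_val, map_sub, hker, sub_zero]

theorem starProjection_orthogonal_ker_comp_eq_of_comp_eq [CompleteSpace E] {A : E →L[𝕜] F}
    {Z W : E →L[𝕜] E} (h : A ∘L Z = A ∘L W) :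
    (A : E →ₗ[𝕜] F).kerᗮ.starProjection ∘L Z = (A : E →ₗ[𝕜] F).kerᗮ.starProjection ∘L W := by
  ext x
  have hker : Z x - W x ∈ (A : E →ₗ[𝕜] F).ker := by
    simpa [sub_eq_zero] using congr($h x)
  rw [comp_apply, comp_apply, ← sub_eq_zero, ← map_sub]
  exact Submodule.starProjection_orthogonal_apply_eq_zero hker

end Projections

theorem stmt13 {H K : Type*} [NormedAddCommGroup H] [InnerProductSpace ℂ H] [CompleteSpace H]
    [NormedAddCommGroup K] [InnerProductSpace ℂ K] [CompleteSpace K]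
    (A B : H →L[ℂ] K) :
    (∃ (Qt : K →L[ℂ] K) (Q : H →L[ℂ] H),
      Qt ∘L Qt = Qt ∧ Q ∘L Q = Q ∧ A = Qt ∘L B ∧ A = B ∘L Q) ↔
    (∃ (X : K →L[ℂ] K) (Y : H →L[ℂ] H),
      A = X ∘L B ∧ A = B ∘L Y ∧ A = X ∘L A) := by
  constructor
  · rintro ⟨Qt, Q, hQt, -, hQtB, hBQ⟩
    exact ⟨Qt, Q, hQtB, hBQ, by rw [hQtB, ← comp_assoc, hQt]⟩
  · rintro ⟨X, Y, hXB, hBY, hXA⟩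
    obtain ⟨Qt, hQt, hQtB⟩ := exists_idempotent_left_factor
      (starProjection_closure_range_comp_self B)
      (fun _ _ ↦ comp_starProjection_closure_range_eq_of_comp_eq) hXB hBY hXA
    obtain ⟨Q, hQ, hBQ⟩ := exists_idempotent_right_factor
      (comp_starProjection_orthogonal_ker A)
      (fun _ _ ↦ starProjection_orthogonal_ker_comp_eq_of_comp_eq) hXB hBY hXA
    exact ⟨Qt, Q, hQt, hQ, hQtB, hBQ⟩
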